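/- arXiv:2307.02749 — 3 statements merged into one kernel-verified Lean document; each statement's English description precedes it below -/
import Mathlib

section
/- Let (a,b,c,d) be integers with gcd(a,b,c,d)=1 satisfying the Descartes equation (a+b+c+d)^2 = 2(a^2+b^2+c^2+d^2), and let p ≡ 3 (mod 4) be prime. Then the p-adic valuation of a+b is even (where the valuation of 0 is treated as infinite, i.e., if a+b ≠ 0 then v_p(a+b) is even). -/
lemma dvd_of_dvd_sq_add_sq (p : ℕ) (hp : p.Prime) (hp4 : p % 4 = 3)
    (x y : ℤ) (hdvd : (p : ℤ) ∣ x ^ 2 + y ^ 2) : (p : ℤ) ∣ x ∧ (p : ℤ) ∣ y := by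
  haveI : Fact p.Prime := ⟨hp⟩
  have hy : (p : ℤ) ∣ y := by
    by_contra hy
    have hy0 : (y : ZMod p) ≠ 0 := by
      rwa [Ne, ZMod.intCast_zmod_eq_zero_iff_dvd]
    have h0 : ((x : ZMod p)) ^ 2 + (y : ZMod p) ^ 2 = 0 := by
      have := (ZMod.intCast_zmod_eq_zero_iff_dvd (x ^ 2 + y ^ 2) p).mpr hdvd
      push_cast at this
      exact this
    have hsq : IsSquare (-1 : ZMod p) := by
      have hyinv : (y : ZMod p) * ((y : ZMod p))⁻¹ = 1 := ZMod.mul_inv_of_unit _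
        (Ne.isUnit hy0)
      have hx2 : (x : ZMod p) ^ 2 = -((y : ZMod p)) ^ 2 := by linear_combination h0
      have hkey : ((x : ZMod p) * ((y : ZMod p))⁻¹) ^ 2 = -1 := by
        calc ((x : ZMod p) * ((y : ZMod p))⁻¹) ^ 2
            = (x : ZMod p) ^ 2 * (((y : ZMod p))⁻¹) ^ 2 := by ring
          _ = -((y : ZMod p) * ((y : ZMod p))⁻¹) ^ 2 := by rw [hx2]; ring
          _ = -1 := by rw [hyinv]; ring
      exact ⟨(x : ZMod p) * ((y : ZMod p))⁻¹, by rw [← hkey]; ring⟩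
    rw [ZMod.exists_sq_eq_neg_one_iff] at hsq
    exact hsq hp4
  refine ⟨?_, hy⟩
  have hx2 : (p : ℤ) ∣ x ^ 2 := by
    have hy2 : (p : ℤ) ∣ y ^ 2 := Dvd.dvd.pow hy (by norm_num)
    have := dvd_sub hdvd hy2
    simpa using this
  exact Int.Prime.dvd_pow' hp hx2

lemma even_val_sq_add_sq (p : ℕ) (hp : p.Prime) (hp4 : p % 4 = 3) :
    ∀ n : ℕ, ∀ x y : ℤ, (x ^ 2 + y ^ 2).natAbs = n → x ^ 2 + y ^ 2 ≠ 0 →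
      Even (padicValInt p (x ^ 2 + y ^ 2)) := by
  haveI : Fact p.Prime := ⟨hp⟩
  intro n
  induction n using Nat.strong_induction_on with
  | _ n ih =>
    intro x y hn h0
    by_cases hdvd : (p : ℤ) ∣ x ^ 2 + y ^ 2
    · obtain ⟨hx, hy⟩ := dvd_of_dvd_sq_add_sq p hp hp4 x y hdvd
      obtain ⟨u, hu⟩ := hx
      obtain ⟨v, hv⟩ := hy
      have key : x ^ 2 + y ^ 2 = (p : ℤ) ^ 2 * (u ^ 2 + v ^ 2) := by
        subst hu hv; ring
      have huv : u ^ 2 + v ^ 2 ≠ 0 := by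
        intro hc; apply h0; rw [key, hc, mul_zero]
      have hlt : (u ^ 2 + v ^ 2).natAbs < n := by
        rw [← hn, key, Int.natAbs_mul]
        have h1 : 1 ≤ (u ^ 2 + v ^ 2).natAbs := Int.natAbs_pos.mpr huv
        have h4 : 4 ≤ ((p : ℤ) ^ 2).natAbs := by
          have := hp.two_le
          have : (2 : ℤ) ≤ (p : ℤ) := by exact_mod_cast hp.two_le
          rw [Int.natAbs_pow]
          calc 4 = 2 ^ 2 := by norm_num
            _ ≤ (p : ℤ).natAbs ^ 2 := by
                apply Nat.pow_le_pow_left; omega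
        nlinarith
      have hrec := ih _ hlt u v rfl huv
      have hppow : ((p : ℤ) ^ 2) ≠ 0 := pow_ne_zero _ (by exact_mod_cast hp.pos.ne')
      rw [key, padicValInt.mul hppow huv]
      have : padicValInt p ((p : ℤ) ^ 2) = 2 := by
        rw [show ((p:ℤ)^2) = ((p^2 : ℕ) : ℤ) by push_cast; ring,
          padicValInt.of_nat, padicValNat.prime_pow]
      rw [this]
      exact (even_two).add hrec
    · rw [padicValInt.eq_zero_of_not_dvd hdvd]
      exact Even.zero

theorem valuation_aplusb_even (a b c d : ℤ)
    (hgcd : Int.gcd (Int.gcd a b) (Int.gcd c d) = 1)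
    (h : (a + b + c + d)^2 = 2 * (a^2 + b^2 + c^2 + d^2))
    (p : ℕ) (hp : p.Prime) (hp4 : p % 4 = 3) (hne : a + b ≠ 0) :
    Even (padicValInt p (a + b)) := by
  haveI : Fact p.Prime := ⟨hp⟩
  have hpodd : p ≠ 2 := by omega
  have key : (a - b) ^ 2 + (c - d) ^ 2 = 2 * (a + b) * (c + d) := by
    linear_combination -h
  by_cases hcd : c + d = 0
  · -- then a - b = 0 and c - d = 0
    have h1 : (a - b) ^ 2 + (c - d) ^ 2 = 0 := by rw [key, hcd, mul_zero]
    have hab : a = b := by nlinarith [sq_nonneg (a-b), sq_nonneg (c-d)]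
    have hcd2 : c = d := by nlinarith [sq_nonneg (a-b), sq_nonneg (c-d)]
    have hc0 : c = 0 := by omega
    have hd0 : d = 0 := by omega
    subst hab hc0 hd0
    simp [Int.gcd] at hgcd
    -- hgcd : a.natAbs = 1
    have h2 : a + a = 2 * a := by ring
    have : padicValInt p (a + a) = 0 := by
      apply padicValInt.eq_zero_of_not_dvd
      intro hdvd
      have : (p : ℤ) ∣ 2 * a := by rwa [h2] at hdvd
      have hp2 : ¬ (p : ℤ) ∣ 2 := by
        intro hc
        have := Int.le_of_dvd (by norm_num) hc
        have := hp.two_le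
        omega
      have hpa : (p : ℤ) ∣ a := ((Int.Prime.dvd_mul' (hp) this).resolve_left hp2)
      have h3 := Int.natAbs_dvd_natAbs.mpr hpa
      rw [Int.natAbs_natCast] at h3
      have h4 : a.natAbs = 1 := by simpa [Int.natAbs_abs] using hgcd
      rw [h4] at h3
      have := Nat.dvd_one.mp h3
      have := hp.two_le
      omega
    rw [this]; exact Even.zero
  · have hS : (a - b) ^ 2 + (c - d) ^ 2 ≠ 0 := by
      rw [key]
      intro hc
      rcases mul_eq_zero.mp hc with h1 | h1
      · rcases mul_eq_zero.mp h1 with h2 | h2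
        · norm_num at h2
        · exact hne h2
      · exact hcd h1
    have heven := even_val_sq_add_sq p hp hp4 _ (a - b) (c - d) rfl hS
    rw [key] at heven
    have h2ne : (2 : ℤ) ≠ 0 := by norm_num
    rw [padicValInt.mul (mul_ne_zero h2ne hne) hcd, padicValInt.mul h2ne hne] at heven
    have hv2 : padicValInt p 2 = 0 := by
      apply padicValInt.eq_zero_of_not_dvd
      intro hc
      have := Int.le_of_dvd (by norm_num) hc
      have := hp.two_le
      omega
    rw [hv2, zero_add] at heven
    -- p cannot divide both a+b and c+d
    by_cases hdab : (p : ℤ) ∣ a + b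
    · have hdcd : ¬ (p : ℤ) ∣ c + d := by
        intro hdcd
        have hdS : (p : ℤ) ∣ (a - b) ^ 2 + (c - d) ^ 2 := by
          rw [key]
          exact Dvd.dvd.mul_right (Dvd.dvd.mul_left hdab 2) _
        obtain ⟨h1, h2⟩ := dvd_of_dvd_sq_add_sq p hp hp4 _ _ hdS
        have hp2 : ¬ (p : ℤ) ∣ 2 := by
          intro hc
          have := Int.le_of_dvd (by norm_num) hc
          have := hp.two_le
          omega
        have hpp := hp
        have hda : (p : ℤ) ∣ a := by
          have : (p : ℤ) ∣ 2 * a := by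
            have := dvd_add hdab h1; rwa [show a + b + (a - b) = 2 * a by ring] at this
          exact (Int.Prime.dvd_mul' hpp this).resolve_left hp2
        have hdb : (p : ℤ) ∣ b := by
          have : (p : ℤ) ∣ 2 * b := by
            have := dvd_sub hdab h1; rwa [show a + b - (a - b) = 2 * b by ring] at this
          exact (Int.Prime.dvd_mul' hpp this).resolve_left hp2
        have hdc : (p : ℤ) ∣ c := by
          have : (p : ℤ) ∣ 2 * c := by
            have := dvd_add hdcd h2; rwa [show c + d + (c - d) = 2 * c by ring] at this
          exact (Int.Prime.dvd_mul' hpp this).resolve_left hp2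
        have hdd : (p : ℤ) ∣ d := by
          have : (p : ℤ) ∣ 2 * d := by
            have := dvd_sub hdcd h2; rwa [show c + d - (c - d) = 2 * d by ring] at this
          exact (Int.Prime.dvd_mul' hpp this).resolve_left hp2
        have hg1 : (p : ℤ) ∣ Int.gcd a b := Int.dvd_coe_gcd hda hdb
        have hg2 : (p : ℤ) ∣ Int.gcd c d := Int.dvd_coe_gcd hdc hdd
        have : (p : ℤ) ∣ (Int.gcd (Int.gcd a b) (Int.gcd c d) : ℕ) := Int.dvd_coe_gcd hg1 hg2
        rw [hgcd] at this
        have := Int.le_of_dvd (by norm_num) this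
        have := hp.two_le
        omega
      rw [padicValInt.eq_zero_of_not_dvd hdcd, add_zero] at heven
      exact heven
    · rw [padicValInt.eq_zero_of_not_dvd hdab]
      exact Even.zero
end

section
/- Let a be an odd positive integer and b = 2b' with b' odd positive, a and b coprime, and a ≡ 3 (mod 4). Then (2a+2b / a) · (-(a+b) / b') = 1, where (·/·) denotes the Kronecker symbol and the numerator -(a+b) is interpreted via ((-1)/b')·((a+b)/b'). -/
/-!
Both factors reduce to Jacobi symbols: modulo `a`, `2a + 4b' ≡ 2²·b'`, and modulo `b'`,
`a + 2b' ≡ a`. For `a ≡ 3 (mod 4)` the reciprocity sign `(-1)^((a-1)/2 · (b'-1)/2)` is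
`J(-1 | b')`, so `J(-a | b') = J(b' | a)`, and the product is `J(b' | a)² = 1` by coprimality.
-/

/-- The Kronecker symbol `(a/n)` for a positive integer `n`: the Jacobi symbol on the odd
part of `n`, times the Kronecker symbol at 2 raised to the 2-adic valuation of `n`. -/
def kron (a : ℤ) (n : ℕ) : ℤ :=
  (if a % 8 = 1 ∨ a % 8 = 7 then 1 else if a % 8 = 3 ∨ a % 8 = 5 then -1 else 0) ^
      (n.factorization 2) *
    jacobiSym a (n / 2 ^ (n.factorization 2))

open jacobiSym
open scoped NumberTheorySymbols

lemma kron_of_odd (x : ℤ) {n : ℕ} (hn : Odd n) : kron x n = J(x | n) := by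
  have h2 : n.factorization 2 = 0 :=
    Nat.factorization_eq_zero_of_not_dvd hn.not_two_dvd_nat
  simp [kron, h2]

lemma jacobiSym_two_mul_add_two_mul_two_mul {a : ℕ} (ha : Odd a) (b : ℤ) :
    J(2 * a + 2 * (2 * b) | a) = J(b | a) := by
  have hmod : (2 * a + 2 * (2 * b)) % (a : ℤ) = ((2 : ℕ) ^ 2 * b : ℤ) % a := by
    rw [show 2 * (a : ℤ) + 2 * (2 * b) = (2 : ℕ) ^ 2 * b + a * 2 by push_cast; ring,
      Int.add_mul_emod_self_left]
  have hcop : Int.gcd (2 : ℕ) a = 1 := by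
    rw [Int.gcd_natCast_natCast]
    exact Nat.coprime_two_left.mpr ha
  rw [mod_left' hmod, mul_left, sq_one' hcop, one_mul]

lemma jacobiSym_add_two_mul_self (x : ℤ) (b : ℕ) : J(x + 2 * b | b) = J(x | b) :=
  mod_left' (by rw [mul_comm, Int.add_mul_emod_self_left])

lemma jacobiSym_neg_left_of_mod_four_eq_three {a b : ℕ} (ha : a % 4 = 3) (hb : Odd b) :
    J(-a | b) = J(b | a) := by
  have ha' : Odd a := Nat.odd_iff.mpr (Nat.odd_of_mod_four_eq_three ha)
  have hsign : qrSign b a = J(-1 | b) := by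
    rw [qrSign.symm hb ha', qrSign, ZMod.χ₄_nat_three_mod_four ha]
  have hunit : J(-1 | b) ^ 2 = 1 := sq_one (by simp)
  rw [neg_eq_neg_one_mul, mul_left, quadratic_reciprocity' ha' hb, hsign, ← mul_assoc, ← sq,
    hunit, one_mul]

theorem kron_product_one_mixed_general (a b' : ℕ)
    (hb'odd : b' % 2 = 1)
    (hcop : Nat.Coprime a (2 * b')) (ha4 : a % 4 = 3) :
    kron (2*(a : ℤ) + 2*(2*b')) a *
      (kron (-1) b' * kron ((a : ℤ) + 2*b') b') = 1 := by
  have ha : Odd a := Nat.odd_iff.mpr (Nat.odd_of_mod_four_eq_three ha4)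
  have hb : Odd b' := Nat.odd_iff.mpr hb'odd
  have hgcd : Int.gcd b' a = 1 := by
    rw [Int.gcd_natCast_natCast]
    exact (Nat.coprime_mul_iff_right.mp hcop).2.symm
  rw [kron_of_odd _ ha, kron_of_odd _ hb, kron_of_odd _ hb,
    jacobiSym_two_mul_add_two_mul_two_mul ha, jacobiSym_add_two_mul_self, ← mul_left,
    neg_one_mul, jacobiSym_neg_left_of_mod_four_eq_three ha4 hb, ← sq]
  exact sq_one hgcd

theorem kron_product_one_mixed (a b' : ℕ) (ha : 0 < a) (hb' : 0 < b')
    (haodd : a % 2 = 1) (hb'odd : b' % 2 = 1)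
    (hcop : Nat.Coprime a (2 * b')) (ha4 : a % 4 = 3) :
    kron (2*(a : ℤ) + 2*(2*b')) a *
      (kron (-1) b' * kron ((a : ℤ) + 2*b') b') = 1 :=
  kron_product_one_mixed_general a b' hb'odd hcop ha4
end

section
/- Let (a,b,c,d) be integers with gcd(a,b,c,d)=1 satisfying the Descartes equation. Then for every prime p dividing a·b, there exists an integer x such that f(x) = (a+b)x^2 - (a+b+c-d)x + c is coprime to p. -/
private lemma gcd_one_of_not_dvd {p : ℕ} (hp : p.Prime) {n : ℤ}
    (hnd : ¬ (p : ℤ) ∣ n) : Int.gcd n p = 1 := by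
  have hp' : Prime (p : ℤ) := Nat.prime_iff_prime_int.mp hp
  exact Int.isCoprime_iff_gcd_eq_one.mp ((hp'.coprime_iff_not_dvd.mpr hnd).symm)

theorem tangent_family_coprime_value (a b c d : ℤ)
    (hgcd : Int.gcd (Int.gcd a b) (Int.gcd c d) = 1)
    (h : (a + b + c + d)^2 = 2 * (a^2 + b^2 + c^2 + d^2))
    (p : ℕ) (hp : p.Prime) (hdvd : (p : ℤ) ∣ a * b) :
    ∃ x : ℤ, Int.gcd ((a + b)*x^2 - (a + b + c - d)*x + c) p = 1 := by
  have hp' : Prime (p : ℤ) := Nat.prime_iff_prime_int.mp hp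
  by_cases h0 : (p : ℤ) ∣ c
  · by_cases h1 : (p : ℤ) ∣ d
    · -- p ∣ c, p ∣ d, p ∣ a*b
      have hab : (p : ℤ) ∣ a ∨ (p : ℤ) ∣ b := hp'.dvd_mul.mp hdvd
      have hnab : ¬ (p : ℤ) ∣ (a + b) := by
        intro hs
        have ha : (p : ℤ) ∣ a := by
          rcases hab with ha | hb
          · exact ha
          · have := dvd_sub hs hb; simpa using this
        have hb : (p : ℤ) ∣ b := by
          have := dvd_sub hs ha; simpa using this
        have h2 : (p : ℤ) ∣ (Int.gcd a b : ℤ) := Int.dvd_coe_gcd ha hb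
        have h3 : (p : ℤ) ∣ (Int.gcd c d : ℤ) := Int.dvd_coe_gcd h0 h1
        have h4 : (p : ℤ) ∣ (Int.gcd (Int.gcd a b) (Int.gcd c d) : ℤ) :=
          Int.dvd_coe_gcd h2 h3
        rw [hgcd] at h4
        have := Int.le_of_dvd one_pos h4
        have := hp.two_le
        omega
      have hp2 : ¬ (p : ℤ) ∣ 2 := by
        intro h2
        have hpe : p = 2 := by
          have := Int.le_of_dvd (by norm_num) h2
          have := hp.two_le
          omega
        subst hpe
        -- a+b+c+d is even from Descartes equation
        have heven : (2 : ℤ) ∣ (a + b + c + d) := by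
          have hsq : (2 : ℤ) ∣ (a + b + c + d)^2 := ⟨_, h⟩
          exact hp'.dvd_of_dvd_pow hsq
        have h5 : (2 : ℤ) ∣ (a + b) := by
          have h6 := (heven.sub h0).sub h1
          have e : a + b + c + d - c - d = a + b := by ring
          rwa [e] at h6
        exact hnab h5
      refine ⟨2, gcd_one_of_not_dvd hp ?_⟩
      intro hf
      have hval : (a + b) * 2^2 - (a + b + c - d) * 2 + c = 2*(a+b) - c + 2*d := by ring
      rw [hval] at hf
      have h2ab : (p : ℤ) ∣ 2 * (a + b) := by
        have := dvd_add (dvd_sub hf (dvd_mul_of_dvd_right h1 2)) h0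
        have heq : 2*(a+b) - c + 2*d - 2*d + c = 2*(a+b) := by ring
        calc (p:ℤ) ∣ (2*(a+b) - c + 2*d - 2*d + c) := this
          _ = 2*(a+b) := heq
      rcases hp'.dvd_mul.mp h2ab with h2 | hs
      · exact hp2 h2
      · exact hnab hs
    · refine ⟨1, gcd_one_of_not_dvd hp fun hf => h1 ?_⟩
      have e : (a + b)*1^2 - (a + b + c - d)*1 + c = d := by ring
      rwa [e] at hf
  · exact ⟨0, gcd_one_of_not_dvd hp (by simpa using h0)⟩
end
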